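/- Let ψ : [1,∞) → ℝ be positive, convex, differentiable with ψ'(t) < 0 for all t ≥ 1, and ψ(t) → 0 as t → ∞; set λ(t) = ψ(t)/|ψ'(t)| and α(t) = ψ(t)/(t·|ψ'(t)|). Assume λ is nondecreasing and α is nonincreasing on [1,∞). Then for every n ∈ ℕ (n ≥ 1) with α(n) ≤ 1/4, one has n·ψ(n)·λ(n) ≤ Σ_{k=n}^∞ k·ψ(k) ≤ n·ψ(n)·λ(n)·(1 + 4·α(n)) + n·ψ(n). -/
import Mathlib


open MeasureTheory Real Filter

/-- Under the `𝔐`-type conditions on `ψ`, with `λ(t) = ψ(t)/|ψ'(t)|`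
nondecreasing and `α(t) = ψ(t)/(t|ψ'(t)|)` nonincreasing, if `n ≥ 1` and `α(n) ≤ 1/4` then
`nψ(n)λ(n) ≤ Σ_{k=n}^∞ kψ(k) ≤ nψ(n)λ(n)(1 + 4α(n)) + nψ(n)`. -/
theorem sum_k_psi_two_sided (ψ ψ' : ℝ → ℝ)
    (hpos : ∀ t, 1 ≤ t → 0 < ψ t)
    (hconv : ConvexOn ℝ (Set.Ici (1 : ℝ)) ψ)
    (hderiv : ∀ t, 1 ≤ t → HasDerivAt ψ (ψ' t) t)
    (hneg : ∀ t, 1 ≤ t → ψ' t < 0)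
    (hlim : Filter.Tendsto ψ Filter.atTop (nhds 0))
    (hlam_mono : ∀ s t, 1 ≤ s → s ≤ t → ψ s / |ψ' s| ≤ ψ t / |ψ' t|)
    (halp_anti : ∀ s t, 1 ≤ s → s ≤ t → ψ t / (t * |ψ' t|) ≤ ψ s / (s * |ψ' s|))
    (n : ℕ) (hn : 1 ≤ n) (hα : ψ (n : ℝ) / ((n : ℝ) * |ψ' (n : ℝ)|) ≤ 1 / 4) :
    (n : ℝ) * ψ (n : ℝ) * (ψ (n : ℝ) / |ψ' (n : ℝ)|) ≤
        (∑' k : ℕ, ((k + n : ℕ) : ℝ) * ψ ((k + n : ℕ) : ℝ)) ∧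
      (∑' k : ℕ, ((k + n : ℕ) : ℝ) * ψ ((k + n : ℕ) : ℝ)) ≤
        (n : ℝ) * ψ (n : ℝ) * (ψ (n : ℝ) / |ψ' (n : ℝ)|) *
            (1 + 4 * (ψ (n : ℝ) / ((n : ℝ) * |ψ' (n : ℝ)|))) + (n : ℝ) * ψ (n : ℝ) := by
  -- Notation
  set nr : ℝ := (n : ℝ) with hnr
  have hn1 : (1 : ℝ) ≤ nr := Nat.one_le_cast.mpr hn
  have hn0 : (0 : ℝ) < nr := lt_of_lt_of_le one_pos hn1
  have habs_pos : ∀ t, 1 ≤ t → 0 < |ψ' t| := fun t ht => abs_pos.mpr (hneg t ht).ne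
  have habs : ∀ t, 1 ≤ t → |ψ' t| = -ψ' t := fun t ht => abs_of_neg (hneg t ht)
  set A : ℝ := ψ nr / (nr * |ψ' nr|) with hA
  set L : ℝ := ψ nr / |ψ' nr| with hL
  have hA0 : 0 < A := div_pos (hpos nr hn1) (mul_pos hn0 (habs_pos nr hn1))
  have hL0 : 0 < L := div_pos (hpos nr hn1) (habs_pos nr hn1)
  have hLnA : L = nr * A := by
    rw [hA, hL, ← mul_div_assoc, mul_div_mul_left _ _ hn0.ne']
  -- pointwise inequalities for t ≥ n
  have hAt : ∀ t, nr ≤ t → ψ t ≤ A * (t * |ψ' t|) := by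
    intro t ht
    have h1t : (1 : ℝ) ≤ t := le_trans hn1 ht
    have := halp_anti nr t hn1 ht
    have hpos' : 0 < t * |ψ' t| := mul_pos (lt_of_lt_of_le one_pos h1t) (habs_pos t h1t)
    rw [div_le_iff₀ hpos'] at this
    linarith [this]
  have hA4t : ∀ t, nr ≤ t → ψ t ≤ (1 / 4) * (t * |ψ' t|) := by
    intro t ht
    have h1t : (1 : ℝ) ≤ t := le_trans hn1 ht
    have h := le_trans (halp_anti nr t hn1 ht) hα
    have hpos' : 0 < t * |ψ' t| := mul_pos (lt_of_lt_of_le one_pos h1t) (habs_pos t h1t)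
    rw [div_le_iff₀ hpos'] at h
    linarith [h]
  have hLt : ∀ t, nr ≤ t → L * |ψ' t| ≤ ψ t := by
    intro t ht
    have h1t : (1 : ℝ) ≤ t := le_trans hn1 ht
    have := hlam_mono nr t hn1 ht
    rw [hL]
    calc ψ nr / |ψ' nr| * |ψ' t| ≤ ψ t / |ψ' t| * |ψ' t| := by
          apply mul_le_mul_of_nonneg_right this (abs_nonneg _)
      _ = ψ t := by rw [div_mul_cancel₀ _ (habs_pos t h1t).ne']
  clear_value A L
  -- antitonicity of t ↦ t⁴ψ(t) on [n, ∞)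
  have hg_anti : AntitoneOn (fun t => t ^ 4 * ψ t) (Set.Ici nr) := by
    apply antitoneOn_of_hasDerivWithinAt_nonpos (convex_Ici nr)
      (f' := fun t => (4 : ℕ) * t ^ 3 * ψ t + t ^ 4 * ψ' t)
    · intro t ht
      have h1t : (1 : ℝ) ≤ t := le_trans hn1 ht
      exact ((continuous_pow 4).continuousAt.continuousWithinAt.mul
        ((hderiv t h1t).continuousAt.continuousWithinAt))
    · intro x hx
      rw [interior_Ici] at hx
      have h1x : (1 : ℝ) ≤ x := le_trans hn1 (le_of_lt hx)
      have h := (hasDerivAt_pow 4 x).mul (hderiv x h1x)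
      have : ((4 : ℕ) : ℝ) * x ^ (4 - 1) * ψ x + x ^ 4 * ψ' x
          = (4 : ℕ) * x ^ 3 * ψ x + x ^ 4 * ψ' x := by norm_num
      rw [this] at h
      exact h.hasDerivWithinAt
    · intro x hx
      rw [interior_Ici] at hx
      have hnx : nr ≤ x := le_of_lt hx
      have h1x : (1 : ℝ) ≤ x := le_trans hn1 hnx
      have hx0 : (0 : ℝ) < x := lt_of_lt_of_le one_pos h1x
      have h4 := hA4t x hnx
      rw [habs x h1x] at h4
      have h3 : (0 : ℝ) ≤ x ^ 3 := by positivity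
      have key : 4 * ψ x + x * ψ' x ≤ 0 := by linarith
      have := mul_nonpos_of_nonneg_of_nonpos h3 key
      push_cast
      nlinarith [this]
  -- antitonicity of t ↦ tψ(t) on [n, ∞)
  have hh_anti : AntitoneOn (fun t => t * ψ t) (Set.Ici nr) := by
    apply antitoneOn_of_hasDerivWithinAt_nonpos (convex_Ici nr)
      (f' := fun t => 1 * ψ t + t * ψ' t)
    · intro t ht
      have h1t : (1 : ℝ) ≤ t := le_trans hn1 ht
      exact (continuous_id.continuousAt.continuousWithinAt.mul
        ((hderiv t h1t).continuousAt.continuousWithinAt))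
    · intro x hx
      rw [interior_Ici] at hx
      have h1x : (1 : ℝ) ≤ x := le_trans hn1 (le_of_lt hx)
      exact ((hasDerivAt_id x).mul (hderiv x h1x)).hasDerivWithinAt
    · intro x hx
      rw [interior_Ici] at hx
      have hnx : nr ≤ x := le_of_lt hx
      have h1x : (1 : ℝ) ≤ x := le_trans hn1 hnx
      have h4 := hA4t x hnx
      rw [habs x h1x] at h4
      have hψx := hpos x h1x
      nlinarith
  -- tail bound : t ψ(t) ≤ n⁴ψ(n)/t³
  have htail : ∀ t, nr ≤ t → t * ψ t ≤ nr ^ 4 * ψ nr / t ^ 3 := by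
    intro t ht
    have h1t : (1 : ℝ) ≤ t := le_trans hn1 ht
    have ht0 : (0 : ℝ) < t := lt_of_lt_of_le one_pos h1t
    have hg := hg_anti Set.self_mem_Ici ht ht
    simp only at hg
    rw [le_div_iff₀ (by positivity : (0:ℝ) < t ^ 3)]
    nlinarith [hg]
  -- the sequence
  set u : ℕ → ℝ := fun k => ((k + n : ℕ) : ℝ) * ψ ((k + n : ℕ) : ℝ) with hu
  have hu0 : ∀ k, 0 ≤ u k := by
    intro k
    have h1 : (1 : ℝ) ≤ ((k + n : ℕ) : ℝ) := by
      have : 1 ≤ k + n := le_trans hn (Nat.le_add_left n k)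
      exact_mod_cast this
    exact mul_nonneg (by linarith) (le_of_lt (hpos _ h1))
  -- main integral estimates, for each m : ℕ, on [n, n+m]
  have key : ∀ m : ℕ,
      L * (nr * ψ nr - ((n + m : ℕ) : ℝ) * ψ ((n + m : ℕ) : ℝ))
          ≤ (∫ t in nr..((n + m : ℕ) : ℝ), t * ψ t) ∧
      (∫ t in nr..((n + m : ℕ) : ℝ), t * ψ t) ≤ A * nr ^ 2 * ψ nr * (1 + 4 * A) := by
    intro m
    set N : ℝ := ((n + m : ℕ) : ℝ) with hN
    have hnN : nr ≤ N := by
      rw [hN, hnr]; exact_mod_cast Nat.le_add_right n m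
    have hN1 : (1 : ℝ) ≤ N := le_trans hn1 hnN
    have hIcc : Set.uIcc nr N = Set.Icc nr N := Set.uIcc_of_le hnN
    have hmem1 : ∀ t ∈ Set.Icc nr N, (1 : ℝ) ≤ t := fun t ht => le_trans hn1 ht.1
    -- continuity of ψ on the interval
    have hcψ : ContinuousOn ψ (Set.Icc nr N) := fun t ht =>
      ((hderiv t (hmem1 t ht)).continuousAt).continuousWithinAt
    have hcid : ContinuousOn (fun t : ℝ => t) (Set.Icc nr N) := continuousOn_id
    -- antitone |ψ'|/ψ
    have hinv : AntitoneOn (fun t => |ψ' t| / ψ t) (Set.Icc nr N) := by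
      intro s hs t ht hst
      have h1s := hmem1 s hs
      have h1t := hmem1 t ht
      have h := hlam_mono s t h1s hst
      rw [div_le_div_iff₀ (habs_pos s h1s) (habs_pos t h1t)] at h
      rw [div_le_div_iff₀ (hpos t h1t) (hpos s h1s)]
      nlinarith [h]
    -- integrabilities
    have hint_inv : IntervalIntegrable (fun t => |ψ' t| / ψ t) volume nr N := by
      apply AntitoneOn.intervalIntegrable
      rwa [hIcc]
    have hint_tψ : IntervalIntegrable (fun t => t * ψ t) volume nr N := by
      apply ContinuousOn.intervalIntegrable
      rw [hIcc]; exact hcid.mul hcψ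
    have hint_ψ : IntervalIntegrable ψ volume nr N := by
      apply ContinuousOn.intervalIntegrable
      rwa [hIcc]
    have hint_2tψ : IntervalIntegrable (fun t => 2 * t * ψ t) volume nr N := by
      apply ContinuousOn.intervalIntegrable
      rw [hIcc]
      exact (continuousOn_const.mul hcid).mul hcψ
    have hint1 : IntervalIntegrable (fun t => t * ψ t * (|ψ' t| / ψ t)) volume nr N := by
      apply hint_inv.continuousOn_mul
      rw [hIcc]; exact hcid.mul hcψ
    have hint2 : IntervalIntegrable (fun t => t ^ 2 * ψ t * (|ψ' t| / ψ t)) volume nr N := by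
      apply hint_inv.continuousOn_mul
      rw [hIcc]; exact ((hcid.pow 2).mul hcψ)
    -- FTC for t²ψ(t)
    have hId2 : ∀ t ∈ Set.uIcc nr N, HasDerivAt (fun t => t ^ 2 * ψ t)
        (2 * t * ψ t - t ^ 2 * ψ t * (|ψ' t| / ψ t)) t := by
      intro t ht
      rw [hIcc] at ht
      have h1t := hmem1 t ht
      have h := (hasDerivAt_pow 2 t).mul (hderiv t h1t)
      have he : 2 * t * ψ t - t ^ 2 * ψ t * (|ψ' t| / ψ t)
          = ((2 : ℕ) : ℝ) * t ^ (2 - 1) * ψ t + t ^ 2 * ψ' t := by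
        rw [habs t h1t]
        have := (hpos t h1t).ne'
        field_simp
        ring
      rw [he]
      exact h
    have hI2 : (∫ t in nr..N, (2 * t * ψ t - t ^ 2 * ψ t * (|ψ' t| / ψ t)))
        = N ^ 2 * ψ N - nr ^ 2 * ψ nr :=
      intervalIntegral.integral_eq_sub_of_hasDerivAt hId2 (hint_2tψ.sub hint2)
    -- FTC for tψ(t)
    have hId1 : ∀ t ∈ Set.uIcc nr N, HasDerivAt (fun t => t * ψ t)
        (ψ t - t * ψ t * (|ψ' t| / ψ t)) t := by
      intro t ht
      rw [hIcc] at ht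
      have h1t := hmem1 t ht
      have h := (hasDerivAt_id t).mul (hderiv t h1t)
      have he : ψ t - t * ψ t * (|ψ' t| / ψ t) = 1 * ψ t + t * ψ' t := by
        rw [habs t h1t]
        have := (hpos t h1t).ne'
        field_simp
        ring
      rw [he]
      exact h
    have hI1 : (∫ t in nr..N, (ψ t - t * ψ t * (|ψ' t| / ψ t))) = N * ψ N - nr * ψ nr :=
      intervalIntegral.integral_eq_sub_of_hasDerivAt hId1 (hint_ψ.sub hint1)
    set J : ℝ := ∫ t in nr..N, t * ψ t with hJ
    clear_value J
    have hJ0 : 0 ≤ J := by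
      rw [hJ]
      apply intervalIntegral.integral_nonneg hnN
      intro t ht
      have h1t := hmem1 t ht
      exact mul_nonneg (by linarith) (le_of_lt (hpos t h1t))
    have hψN0 : 0 ≤ ψ N := le_of_lt (hpos N hN1)
    -- value of ∫ t²|ψ'| and ∫ t|ψ'|
    have hsub2 : (∫ t in nr..N, (2 * t * ψ t - t ^ 2 * ψ t * (|ψ' t| / ψ t)))
        = (∫ t in nr..N, 2 * t * ψ t) - ∫ t in nr..N, t ^ 2 * ψ t * (|ψ' t| / ψ t) :=
      intervalIntegral.integral_sub hint_2tψ hint2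
    have h2tψ : (∫ t in nr..N, 2 * t * ψ t) = 2 * J := by
      rw [hJ, ← intervalIntegral.integral_const_mul]
      congr 1; ext t; ring
    have hK2 : (∫ t in nr..N, t ^ 2 * ψ t * (|ψ' t| / ψ t))
        = 2 * J - (N ^ 2 * ψ N - nr ^ 2 * ψ nr) := by
      have := hI2
      rw [hsub2, h2tψ] at this
      linarith
    have hsub1 : (∫ t in nr..N, (ψ t - t * ψ t * (|ψ' t| / ψ t)))
        = (∫ t in nr..N, ψ t) - ∫ t in nr..N, t * ψ t * (|ψ' t| / ψ t) :=
      intervalIntegral.integral_sub hint_ψ hint1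
    have hψnonneg : 0 ≤ ∫ t in nr..N, ψ t := by
      apply intervalIntegral.integral_nonneg hnN
      intro t ht
      exact le_of_lt (hpos t (hmem1 t ht))
    have hK1 : nr * ψ nr - N * ψ N ≤ ∫ t in nr..N, t * ψ t * (|ψ' t| / ψ t) := by
      have := hI1
      rw [hsub1] at this
      linarith
    -- upper bound for J
    have hJub : J ≤ A * (2 * J + nr ^ 2 * ψ nr) := by
      have hmono : J ≤ A * ∫ t in nr..N, t ^ 2 * ψ t * (|ψ' t| / ψ t) := by
        rw [hJ, ← intervalIntegral.integral_const_mul]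
        apply intervalIntegral.integral_mono_on hnN hint_tψ (hint2.const_mul A)
        intro t ht
        have h1t := hmem1 t ht
        have ht0 : (0 : ℝ) < t := lt_of_lt_of_le one_pos h1t
        have he : t ^ 2 * ψ t * (|ψ' t| / ψ t) = t ^ 2 * |ψ' t| := by
          have h0 := (hpos t h1t).ne'
          field_simp
        rw [he]
        calc t * ψ t ≤ t * (A * (t * |ψ' t|)) :=
              mul_le_mul_of_nonneg_left (hAt t ht.1) ht0.le
          _ = A * (t ^ 2 * |ψ' t|) := by ring
      rw [hK2] at hmono
      have hNψ : 0 ≤ N ^ 2 * ψ N := mul_nonneg (sq_nonneg N) hψN0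
      have h1 : A * (2 * J - (N ^ 2 * ψ N - nr ^ 2 * ψ nr)) ≤ A * (2 * J + nr ^ 2 * ψ nr) := by
        apply mul_le_mul_of_nonneg_left _ hA0.le
        linarith
      linarith
    have hJub' : J ≤ A * nr ^ 2 * ψ nr * (1 + 4 * A) := by
      have hC0 : 0 ≤ nr ^ 2 * ψ nr := mul_nonneg (sq_nonneg nr) (hpos nr hn1).le
      have hhalf : 0 ≤ (1 / 2 - 2 * A) * J :=
        mul_nonneg (by linarith : (0:ℝ) ≤ 1 / 2 - 2 * A) hJ0
      have hstep : J ≤ 2 * A * (nr ^ 2 * ψ nr) := by linarith only [hJub, hhalf]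
      have h2 : 2 * A * J ≤ 2 * A * (2 * A * (nr ^ 2 * ψ nr)) :=
        mul_le_mul_of_nonneg_left hstep (by linarith)
      linarith only [hJub, h2]
    -- lower bound for J
    have hJlb : L * (nr * ψ nr - N * ψ N) ≤ J := by
      have hmono : L * (∫ t in nr..N, t * ψ t * (|ψ' t| / ψ t)) ≤ J := by
        rw [hJ, ← intervalIntegral.integral_const_mul]
        apply intervalIntegral.integral_mono_on hnN (hint1.const_mul L) hint_tψ
        intro t ht
        have h1t := hmem1 t ht
        have ht0 : (0 : ℝ) < t := lt_of_lt_of_le one_pos h1t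
        have he : t * ψ t * (|ψ' t| / ψ t) = t * |ψ' t| := by
          have h0 := (hpos t h1t).ne'
          field_simp
        rw [he]
        calc L * (t * |ψ' t|) = t * (L * |ψ' t|) := by ring
          _ ≤ t * ψ t := mul_le_mul_of_nonneg_left (hLt t ht.1) ht0.le
      calc L * (nr * ψ nr - N * ψ N)
          ≤ L * ∫ t in nr..N, t * ψ t * (|ψ' t| / ψ t) :=
            mul_le_mul_of_nonneg_left hK1 hL0.le
        _ ≤ J := hmono
    exact ⟨hJlb, hJub'⟩
  -- partial sums bounded above
  have hpart : ∀ M : ℕ, (∑ k ∈ Finset.range M, u k)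
      ≤ nr * ψ nr + A * nr ^ 2 * ψ nr * (1 + 4 * A) := by
    intro M
    cases M with
    | zero =>
        simp only [Finset.range_zero, Finset.sum_empty]
        have : 0 ≤ ψ nr := (hpos nr hn1).le
        positivity
    | succ m =>
        rw [Finset.sum_range_succ']
        have hu0' : u 0 = nr * ψ nr := by
          simp [hu, hnr]
        have hanti : AntitoneOn (fun t : ℝ => t * ψ t) (Set.Icc (n : ℝ) ((n + m : ℕ) : ℝ)) :=
          hh_anti.mono (Set.Icc_subset_Ici_self)
        have hsum := AntitoneOn.sum_le_integral_Ico (Nat.le_add_right n m) hanti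
        have hindex : (∑ i ∈ Finset.Ico n (n + m), (((i + 1 : ℕ) : ℝ) * ψ ((i + 1 : ℕ) : ℝ)))
            = ∑ k ∈ Finset.range m, u (k + 1) := by
          rw [Finset.sum_Ico_eq_sum_range]
          simp only [Nat.add_sub_cancel_left]
          apply Finset.sum_congr rfl
          intro k _
          have : n + k + 1 = k + 1 + n := by omega
          rw [this]
        rw [hindex] at hsum
        have := (key m).2
        have hfin : (∑ k ∈ Finset.range m, u (k + 1)) ≤ A * nr ^ 2 * ψ nr * (1 + 4 * A) :=
          le_trans hsum this
        rw [hu0']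
        linarith
  have hsummable : Summable u := summable_of_sum_range_le hu0 hpart
  constructor
  · -- lower bound
    have hlow : ∀ m : ℕ, L * (nr * ψ nr) - L * (((n + m : ℕ) : ℝ) * ψ ((n + m : ℕ) : ℝ))
        ≤ ∑' k, u k := by
      intro m
      have h1 := (key m).1
      have hanti : AntitoneOn (fun t : ℝ => t * ψ t) (Set.Icc (n : ℝ) ((n + m : ℕ) : ℝ)) :=
        hh_anti.mono (Set.Icc_subset_Ici_self)
      have hsum := AntitoneOn.integral_le_sum_Ico (Nat.le_add_right n m) hanti
      have hindex : (∑ i ∈ Finset.Ico n (n + m), (((i : ℕ) : ℝ) * ψ ((i : ℕ) : ℝ)))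
          = ∑ k ∈ Finset.range m, u k := by
        rw [Finset.sum_Ico_eq_sum_range]
        simp only [Nat.add_sub_cancel_left]
        apply Finset.sum_congr rfl
        intro k _
        have : n + k = k + n := by omega
        rw [this]
      rw [hindex] at hsum
      have hts : (∑ k ∈ Finset.range m, u k) ≤ ∑' k, u k :=
        Summable.sum_le_tsum (Finset.range m) (fun i _ => hu0 i) hsummable
      calc L * (nr * ψ nr) - L * (((n + m : ℕ) : ℝ) * ψ ((n + m : ℕ) : ℝ))
          = L * (nr * ψ nr - ((n + m : ℕ) : ℝ) * ψ ((n + m : ℕ) : ℝ)) := by ring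
        _ ≤ ∫ t in nr..((n + m : ℕ) : ℝ), t * ψ t := h1
        _ ≤ ∑ k ∈ Finset.range m, u k := hsum
        _ ≤ ∑' k, u k := hts
    -- take m → ∞ via an ε argument
    refine le_of_forall_pos_le_add ?_
    intro ε hε
    obtain ⟨m0, hm0⟩ := exists_nat_ge (L * (nr ^ 4 * ψ nr) / ε)
    set m : ℕ := m0 + 1 with hm
    have hm1 : (1 : ℝ) ≤ (m : ℝ) := by exact_mod_cast Nat.le_add_left 1 m0
    set N : ℝ := ((n + m : ℕ) : ℝ) with hN
    have hnN : nr ≤ N := by rw [hN, hnr]; exact_mod_cast Nat.le_add_right n m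
    have hmN : (m : ℝ) ≤ N := by rw [hN]; exact_mod_cast Nat.le_add_left m n
    have hN1 : (1 : ℝ) ≤ N := le_trans hm1 hmN
    have htail' : N * ψ N ≤ nr ^ 4 * ψ nr / N ^ 3 := htail N hnN
    have hN3 : (m : ℝ) ≤ N ^ 3 := by
      nlinarith only [hmN, hN1, mul_nonneg (mul_nonneg
        (by linarith : (0:ℝ) ≤ N) (by linarith : (0:ℝ) ≤ N - 1))
        (by linarith : (0:ℝ) ≤ N + 1)]
    have htail'' : N * ψ N ≤ nr ^ 4 * ψ nr / (m : ℝ) := by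
      calc N * ψ N ≤ nr ^ 4 * ψ nr / N ^ 3 := htail'
        _ ≤ nr ^ 4 * ψ nr / (m : ℝ) := by
            apply div_le_div_of_nonneg_left
              (mul_nonneg (by positivity) (hpos nr hn1).le) (by linarith) hN3
    have hεm : L * (nr ^ 4 * ψ nr / (m : ℝ)) ≤ ε := by
      rw [div_le_iff₀ hε] at hm0
      have hcast : (m0 : ℝ) * ε ≤ (m : ℝ) * ε :=
        mul_le_mul_of_nonneg_right (by exact_mod_cast Nat.le_succ m0) hε.le
      have hm0' : L * (nr ^ 4 * ψ nr) ≤ (m : ℝ) * ε := by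
        linarith only [hm0, hcast]
      rw [mul_div_assoc', div_le_iff₀ (by linarith : (0:ℝ) < (m : ℝ))]
      linarith only [hm0']
    have h := hlow m
    have hLN : L * (N * ψ N) ≤ ε := by
      calc L * (N * ψ N) ≤ L * (nr ^ 4 * ψ nr / (m : ℝ)) :=
            mul_le_mul_of_nonneg_left htail'' hL0.le
        _ ≤ ε := hεm
    have : L * (nr * ψ nr) - ε ≤ ∑' k, u k := by
      calc L * (nr * ψ nr) - ε ≤ L * (nr * ψ nr) - L * (N * ψ N) := by linarith
        _ ≤ ∑' k, u k := h
    linarith [this]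
  · -- upper bound
    have := Real.tsum_le_of_sum_range_le hu0 hpart
    calc (∑' k, u k) ≤ nr * ψ nr + A * nr ^ 2 * ψ nr * (1 + 4 * A) := this
      _ = nr * ψ nr * L * (1 + 4 * A) + nr * ψ nr := by
          rw [hLnA]; ring
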